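/- Suppose min_{j∈J} T_j > 1. Then the system is uniformly persistent with respect to the pair (X₀, ∂X₀): there exists δ > 0 such that every solution of the within-host bacterial dynamics system with initial datum in X₀ (i.e., a nonnegative initial datum in Ω with positive total bacterial population) satisfies liminf_{t→∞} (N_s(t)+N_m(t)+N_p(t)+N_{m.p}(t)) ≥ δ. -/

import Mathlib

open Filter Set Matrix

/-- Parameters of the within-host bacterial dynamics system:
`Lam` = Λ (nutrient inflow), `d` = nutrient washout rate, `ds,dm,dp,dmp` = death
rates `d_j`, `bs,bm,bp,bmp` = consumption rates `β_j`, `ts,tm,tp,tmp` = conversion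
factors `τ_j`, `es,em,ep,emp` = mutation ratios `ε_j`, `th` = segregation ratio θ,
`al` = HGT flux α, and `aH, bH` the Beddington–DeAngelis constants. -/
structure ModelParams where
  Lam : ℝ
  d : ℝ
  ds : ℝ
  dm : ℝ
  dp : ℝ
  dmp : ℝ
  bs : ℝ
  bm : ℝ
  bp : ℝ
  bmp : ℝ
  ts : ℝ
  tm : ℝ
  tp : ℝ
  tmp : ℝ
  es : ℝ
  em : ℝ
  ep : ℝ
  emp : ℝ
  th : ℝ
  al : ℝ
  aH : ℝ
  bH : ℝ

/-- Right-hand side of the ODE system, with state `x = (B, N_s, N_m, N_p, N_{m.p})`. -/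
noncomputable def rhs (p : ModelParams) (x : Fin 5 → ℝ) : Fin 5 → ℝ :=
  ![p.Lam - p.d * x 0 - x 0 * (p.bs * x 1 + p.bm * x 2 + p.bp * x 3 + p.bmp * x 4),
    p.ts * p.bs * (1 - p.es) * x 0 * x 1 - p.ds * x 1 + p.em * p.tm * p.bm * x 0 * x 2
      + p.th * p.tp * p.bp * x 0 * x 3
      - (p.al / (p.aH + p.bH * (x 1 + x 2 + x 3 + x 4))) * x 1 * (x 3 + x 4),
    p.tm * p.bm * (1 - p.em) * x 0 * x 2 - p.dm * x 2 + p.es * p.ts * p.bs * x 0 * x 1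
      + p.th * p.tmp * p.bmp * x 0 * x 4
      - (p.al / (p.aH + p.bH * (x 1 + x 2 + x 3 + x 4))) * x 2 * (x 3 + x 4),
    p.tp * p.bp * (1 - p.th) * (1 - p.ep) * x 0 * x 3 - p.dp * x 3
      + p.emp * (1 - p.th) * p.tmp * p.bmp * x 0 * x 4
      + (p.al / (p.aH + p.bH * (x 1 + x 2 + x 3 + x 4))) * x 1 * (x 3 + x 4),
    p.tmp * p.bmp * (1 - p.th) * (1 - p.emp) * x 0 * x 4 - p.dmp * x 4
      + p.ep * (1 - p.th) * p.tp * p.bp * x 0 * x 3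
      + (p.al / (p.aH + p.bH * (x 1 + x 2 + x 3 + x 4))) * x 2 * (x 3 + x 4)]

/-- Natural hypotheses on the parameters. -/
def ModelParams.Valid (p : ModelParams) : Prop :=
  0 < p.Lam ∧ 0 < p.d ∧ 0 < p.ds ∧ 0 < p.dm ∧ 0 < p.dp ∧ 0 < p.dmp ∧
  0 ≤ p.bs ∧ 0 ≤ p.bm ∧ 0 ≤ p.bp ∧ 0 ≤ p.bmp ∧
  0 ≤ p.ts ∧ 0 ≤ p.tm ∧ 0 ≤ p.tp ∧ 0 ≤ p.tmp ∧
  p.es ∈ Set.Ioo (0:ℝ) 1 ∧ p.em ∈ Set.Ioo (0:ℝ) 1 ∧ p.ep ∈ Set.Ioo (0:ℝ) 1 ∧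
  p.emp ∈ Set.Ioo (0:ℝ) 1 ∧ p.th ∈ Set.Ioo (0:ℝ) 1 ∧
  0 ≤ p.al ∧ 0 ≤ p.aH ∧ 0 ≤ p.bH ∧ 0 < p.aH + p.bH

/-- `x : ℝ → Fin 5 → ℝ` is a global-in-time (for `t ≥ 0`) solution of the system. -/
noncomputable def IsSolution (p : ModelParams) (x : ℝ → Fin 5 → ℝ) : Prop :=
  ∀ t : ℝ, 0 ≤ t → ∀ i : Fin 5, HasDerivAt (fun s => x s i) (rhs p (x t) i) t

/-!
The total population `N = N_s + N_m + N_p + N_{m.p}` satisfies `N' = ∑ⱼ (B τⱼ βⱼ - dⱼ) Nⱼ`: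
mutation, segregation and horizontal transfer only move bacteria between strains. Hence `N`
decays at most at the exponential rate `D = max dⱼ`, and grows exponentially as long as the
nutrient stays above a level `B* < B₀` with `B* τⱼ βⱼ > dⱼ` for all `j`, which exists since every
`Tⱼ > 1`. While `N ≤ η` for a small `η`, the nutrient satisfies `B' ≥ Λ - (d + η max βⱼ) B`, so it
climbs above `B*` within a fixed time `T`. Therefore `N` cannot stay below `η` forever, and after
it first exceeds `η` every excursion below `η` either lasts less than `T`, losing at most a factor
`exp (-D T)`, or ends in exponential growth: eventually `N ≥ η exp (-D T)`.
-/

open Topology Real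

theorem le_gronwallBound_of_hasDerivAt {f f' : ℝ → ℝ} {K ε a b : ℝ} (hab : a ≤ b)
    (hf : ∀ u ∈ Icc a b, HasDerivAt f (f' u) u) (bound : ∀ u ∈ Ico a b, f' u ≤ K * f u + ε) :
    f b ≤ gronwallBound (f a) K ε (b - a) :=
  le_gronwallBound_of_liminf_deriv_right_le (fun u hu => (hf u hu).continuousAt.continuousWithinAt)
    (fun u hu _ hr => (hf u (Ico_subset_Icc_self hu)).hasDerivWithinAt.liminf_right_slope_le hr)
    le_rfl bound b ⟨hab, le_rfl⟩

theorem gronwallBound_neg (δ K ε x : ℝ) :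
    gronwallBound (-δ) K (-ε) x = -gronwallBound δ K ε x := by
  unfold gronwallBound; split_ifs <;> ring

theorem gronwallBound_le_of_hasDerivAt {f f' : ℝ → ℝ} {K ε a b : ℝ} (hab : a ≤ b)
    (hf : ∀ u ∈ Icc a b, HasDerivAt f (f' u) u) (bound : ∀ u ∈ Ico a b, K * f u + ε ≤ f' u) :
    gronwallBound (f a) K ε (b - a) ≤ f b := by
  have := le_gronwallBound_of_hasDerivAt (f := -f) (f' := -f') (K := K) (ε := -ε) hab
    (fun u hu => (hf u hu).neg) (fun u hu => by simp only [Pi.neg_apply]; linarith [bound u hu])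
  simpa [gronwallBound_neg] using this

theorem gronwallBound_neg_rate {c : ℝ} (hc : c ≠ 0) (δ ε x : ℝ) :
    gronwallBound δ (-c) ε x = δ * exp (-c * x) + ε / c * (1 - exp (-c * x)) := by
  rw [gronwallBound_of_K_ne_0 (neg_ne_zero.2 hc), div_neg]; ring

theorem mul_exp_le_of_mul_le_deriv {f f' : ℝ → ℝ} {r a b : ℝ} (hab : a ≤ b)
    (hf : ∀ u ∈ Icc a b, HasDerivAt f (f' u) u) (bound : ∀ u ∈ Ico a b, r * f u ≤ f' u) :
    f a * exp (r * (b - a)) ≤ f b := by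
  simpa [gronwallBound_ε0] using
    gronwallBound_le_of_hasDerivAt (ε := 0) hab hf (by simpa using bound)

theorem le_max_of_deriv_le_affine {f f' : ℝ → ℝ} {L c a b : ℝ} (hab : a ≤ b) (hc : 0 < c)
    (hf : ∀ u ∈ Icc a b, HasDerivAt f (f' u) u) (bound : ∀ u ∈ Ico a b, f' u ≤ L - c * f u) :
    f b ≤ max (f a) (L / c) := by
  have h := le_gronwallBound_of_hasDerivAt (K := -c) (ε := L) hab hf
    (fun u hu => by linarith [bound u hu])
  rw [gronwallBound_neg_rate hc.ne'] at h
  have he₀ : 0 ≤ exp (-c * (b - a)) := (exp_pos _).le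
  have he₁ : exp (-c * (b - a)) ≤ 1 := exp_le_one_iff.2 (by nlinarith)
  nlinarith [le_max_left (f a) (L / c), le_max_right (f a) (L / c)]

theorem mul_one_sub_exp_le_of_affine_le_deriv {f f' : ℝ → ℝ} {L c a b : ℝ} (hab : a ≤ b)
    (hc : 0 < c) (hfa : 0 ≤ f a) (hf : ∀ u ∈ Icc a b, HasDerivAt f (f' u) u)
    (bound : ∀ u ∈ Ico a b, L - c * f u ≤ f' u) :
    L / c * (1 - exp (-c * (b - a))) ≤ f b := by
  have h := gronwallBound_le_of_hasDerivAt (K := -c) (ε := L) hab hf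
    (fun u hu => by linarith [bound u hu])
  rw [gronwallBound_neg_rate hc.ne'] at h
  nlinarith [mul_nonneg hfa (exp_pos (-c * (b - a))).le]

theorem exists_last_ge_of_continuousOn {f : ℝ → ℝ} {a b η : ℝ} (hab : a ≤ b)
    (hf : ContinuousOn f (Icc a b)) (ha : η ≤ f a) (hb : f b ≤ η) :
    ∃ s ∈ Icc a b, η ≤ f s ∧ ∀ u ∈ Icc s b, f u ≤ η := by
  set A := Icc a b ∩ f ⁻¹' Ici η
  have hA : IsClosed A := hf.preimage_isClosed_of_isClosed isClosed_Icc isClosed_Ici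
  have hAbdd : BddAbove A := ⟨b, fun u hu => hu.1.2⟩
  have hsA : sSup A ∈ A := hA.csSup_mem ⟨a, ⟨le_rfl, hab⟩, ha⟩ hAbdd
  set s := sSup A
  have hlt : ∀ u ∈ Ioc s b, f u ≤ η := fun u hu => le_of_not_ge fun hu' =>
    hu.1.not_ge (le_csSup hAbdd ⟨⟨hsA.1.1.trans hu.1.le, hu.2⟩, hu'⟩)
  refine ⟨s, hsA.1, hsA.2, ?_⟩
  rcases hsA.1.2.eq_or_lt with hsb | hsb
  · intro u hu
    rw [hsb] at hu
    rwa [le_antisymm hu.2 hu.1]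
  -- the last crossing `s` is a limit of later times, at which `f ≤ η`
  have hC : IsClosed (Icc s b ∩ f ⁻¹' Iic η) :=
    (hf.mono (Icc_subset_Icc hsA.1.1 le_rfl)).preimage_isClosed_of_isClosed isClosed_Icc
      isClosed_Iic
  have : closure (Ioc s b) ⊆ Icc s b ∩ f ⁻¹' Iic η :=
    hC.closure_subset_iff.2 fun u hu => ⟨Ioc_subset_Icc_self hu, hlt u hu⟩
  rw [closure_Ioc hsb.ne] at this
  exact fun u hu => (this hu).2

theorem eventually_le_of_decay_of_growth {W : ℝ → ℝ} {η D ρ T : ℝ}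
    (hW : ContinuousOn W (Ici 0)) (hW0 : 0 < W 0) (hη : 0 < η) (hD : 0 ≤ D) (hρ : 0 < ρ)
    (hT : 0 ≤ T)
    (decay : ∀ a b, 0 ≤ a → a ≤ b → W a * exp (-D * (b - a)) ≤ W b)
    (growth : ∀ a b, 0 ≤ a → a + T ≤ b → (∀ u ∈ Icc a b, W u ≤ η) →
      W (a + T) * exp (ρ * (b - (a + T))) ≤ W b) :
    ∀ᶠ t in atTop, η * exp (-D * T) ≤ W t := by
  have hpos : ∀ t, 0 ≤ t → 0 < W t := fun t ht =>
    (mul_pos hW0 (exp_pos _)).trans_le (by simpa using decay 0 t le_rfl ht)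
  -- if `W ≤ η` forever, it would grow exponentially after time `T`
  obtain ⟨t₀, ht₀, hηt₀⟩ : ∃ t₀, 0 ≤ t₀ ∧ η < W t₀ := by
    by_contra! hsmall
    have hWT := hpos T hT
    set b := T + η / (ρ * W T)
    have hb : T ≤ b := le_add_of_nonneg_right (by positivity)
    have hgrow := growth 0 b le_rfl (by simpa using hb) fun u hu => hsmall u hu.1
    have hb_sub : ρ * (b - T) = η / W T := by simp only [b, add_sub_cancel_left]; field_simp
    rw [zero_add, hb_sub] at hgrow
    have := add_one_le_exp (η / W T)
    have : W T * (η / W T + 1) = η + W T := by field_simp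
    nlinarith [hsmall b (hT.trans hb)]
  filter_upwards [eventually_ge_atTop t₀] with t ht
  have hδη : η * exp (-D * T) ≤ η :=
    mul_le_of_le_one_right hη.le (exp_le_one_iff.2 (by nlinarith))
  rcases le_or_gt η (W t) with hWt | hWt
  · exact hδη.trans hWt
  obtain ⟨s, hs, hηs, hsmall⟩ := exists_last_ge_of_continuousOn ht
    (hW.mono (Icc_subset_Ici_iff ht |>.2 ht₀)) hηt₀.le hWt.le
  have hs₀ : 0 ≤ s := ht₀.trans hs.1
  have hdecay : ∀ u, s ≤ u → u ≤ s + T → η * exp (-D * T) ≤ W u := fun u hsu hut =>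
    calc η * exp (-D * T) ≤ W s * exp (-D * (u - s)) :=
          mul_le_mul hηs (exp_le_exp.2 (by nlinarith)) (exp_pos _).le (hpos s hs₀).le
      _ ≤ W u := decay s u hs₀ hsu
  rcases le_or_gt t (s + T) with hshort | hlong
  · exact hdecay t hs.2 hshort
  · calc η * exp (-D * T) ≤ W (s + T) := hdecay _ (by linarith) le_rfl
      _ ≤ W (s + T) * exp (ρ * (t - (s + T))) :=
          le_mul_of_one_le_right (hpos _ (by linarith)).le (one_le_exp (by nlinarith))
      _ ≤ W t := growth s t hs₀ hlong.le hsmall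

theorem mul_sum_le_sum_mul_of_le {ι R : Type*} [Semiring R] [PartialOrder R] [IsOrderedRing R]
    (s : Finset ι) {m : R} {a N : ι → R}
    (ha : ∀ j ∈ s, m ≤ a j) (hN : ∀ j ∈ s, 0 ≤ N j) : m * ∑ j ∈ s, N j ≤ ∑ j ∈ s, a j * N j := by
  rw [Finset.mul_sum]
  exact Finset.sum_le_sum fun j hj => mul_le_mul_of_nonneg_right (ha j hj) (hN j hj)

theorem sum_mul_le_mul_sum_of_le {ι R : Type*} [Semiring R] [PartialOrder R] [IsOrderedRing R]
    (s : Finset ι) {M : R} {a N : ι → R}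
    (ha : ∀ j ∈ s, a j ≤ M) (hN : ∀ j ∈ s, 0 ≤ N j) : ∑ j ∈ s, a j * N j ≤ M * ∑ j ∈ s, N j := by
  rw [Finset.mul_sum]
  exact Finset.sum_le_sum fun j hj => mul_le_mul_of_nonneg_right (ha j hj) (hN j hj)

theorem exists_lt_forall_lt_mul {ι : Type*} [Finite ι] {f g : ι → ℝ} {B₀ : ℝ}
    (h : ∀ j, f j < B₀ * g j) : ∃ B < B₀, ∀ j, f j < B * g j := by
  have : ∀ᶠ B in 𝓝[<] B₀, ∀ j, f j < B * g j := eventually_all.2 fun j =>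
    nhdsWithin_le_nhds <| continuousAt_const.eventually_lt (g := fun B => B * g j)
      (by fun_prop) (h j)
  exact (this.and self_mem_nhdsWithin).exists.imp fun B hB => ⟨hB.2, hB.1⟩

theorem exists_pos_lt_div_add_mul {L d k B : ℝ} (hd : d ≠ 0) (hB : B < L / d) :
    ∃ η > 0, B < L / (d + k * η) := by
  have hcont : ContinuousAt (fun η => L / (d + k * η)) 0 :=
    continuousAt_const.div (by fun_prop) (by simpa using hd)
  have : ∀ᶠ η in 𝓝[>] 0, B < L / (d + k * η) :=
    nhdsWithin_le_nhds <| continuousAt_const.eventually_lt hcont (by simpa using hB)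
  exact (this.and self_mem_nhdsWithin).exists.imp fun η hη => ⟨hη.2, hη.1⟩

theorem exists_forall_ge_le_mul_one_sub_exp {L c B : ℝ} (hc : 0 < c) (hB : B < L / c) :
    ∃ T ≥ 0, ∀ s ≥ T, B ≤ L / c * (1 - exp (-c * s)) := by
  have hlim : Tendsto (fun s => L / c * (1 - exp (-c * s))) atTop (𝓝 (L / c * (1 - 0))) := by
    refine tendsto_const_nhds.mul (tendsto_const_nhds.sub ?_)
    exact (tendsto_exp_neg_atTop_nhds_zero.comp (tendsto_id.const_mul_atTop hc)).congr
      fun s => by simp [neg_mul]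
  obtain ⟨T, hT⟩ := eventually_atTop.1 (hlim.eventually (lt_mem_nhds (by simpa using hB)))
  exact ⟨max T 0, le_max_right _ _, fun s hs => (hT s ((le_max_left _ _).trans hs)).le⟩

namespace ModelParams

variable (p : ModelParams)

def conversion : Fin 4 → ℝ := ![p.ts, p.tm, p.tp, p.tmp]

def consumption : Fin 4 → ℝ := ![p.bs, p.bm, p.bp, p.bmp]

def death : Fin 4 → ℝ := ![p.ds, p.dm, p.dp, p.dmp]

variable {p}

theorem Valid.conversion_nonneg (hp : p.Valid) (j : Fin 4) : 0 ≤ p.conversion j := by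
  obtain ⟨-, -, -, -, -, -, -, -, -, -, h₁, h₂, h₃, h₄, -⟩ := hp
  fin_cases j <;> assumption

theorem Valid.consumption_nonneg (hp : p.Valid) (j : Fin 4) : 0 ≤ p.consumption j := by
  obtain ⟨-, -, -, -, -, -, h₁, h₂, h₃, h₄, -⟩ := hp
  fin_cases j <;> assumption

theorem Valid.death_pos (hp : p.Valid) (j : Fin 4) : 0 < p.death j := by
  obtain ⟨-, -, h₁, h₂, h₃, h₄, -⟩ := hp
  fin_cases j <;> assumption

theorem death_lt_of_one_lt_min (hp : p.Valid) {B₀ : ℝ}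
    (h : 1 < min (min (B₀ * p.ts * p.bs / p.ds) (B₀ * p.tm * p.bm / p.dm))
      (min (B₀ * p.tp * p.bp / p.dp) (B₀ * p.tmp * p.bmp / p.dmp))) (j : Fin 4) :
    p.death j < B₀ * (p.conversion j * p.consumption j) := by
  rw [← one_lt_div (hp.death_pos j), ← mul_assoc]
  simp only [lt_min_iff] at h
  obtain ⟨⟨h₁, h₂⟩, h₃, h₄⟩ := h
  fin_cases j <;> simpa [conversion, consumption, death]

end ModelParams

open ModelParams

def totalBacteria (y : Fin 5 → ℝ) : ℝ := ∑ j : Fin 4, y j.succ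

theorem totalBacteria_eq (y : Fin 5 → ℝ) : totalBacteria y = y 1 + y 2 + y 3 + y 4 := by
  simp [totalBacteria, Fin.sum_univ_four]

theorem rhs_zero_eq (p : ModelParams) (y : Fin 5 → ℝ) :
    rhs p y 0 = p.Lam - p.d * y 0 - y 0 * ∑ j, p.consumption j * y j.succ := by
  simp [rhs, consumption, Fin.sum_univ_four]

theorem sum_rhs_succ (p : ModelParams) (y : Fin 5 → ℝ) :
    ∑ j : Fin 4, rhs p y j.succ =
      ∑ j, (y 0 * (p.conversion j * p.consumption j) - p.death j) * y j.succ := by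
  simp [rhs, conversion, consumption, death, Fin.sum_univ_four]
  ring

namespace IsSolution

variable {p : ModelParams} {x : ℝ → Fin 5 → ℝ}

theorem hasDerivAt_totalBacteria (hx : IsSolution p x) {t : ℝ} (ht : 0 ≤ t) :
    HasDerivAt (fun s => totalBacteria (x s)) (∑ j : Fin 4, rhs p (x t) j.succ) t :=
  HasDerivAt.fun_sum fun (j : Fin 4) _ => hx t ht j.succ

variable (hp : p.Valid) (hx : IsSolution p x) (hnn : ∀ t, 0 ≤ t → ∀ i, 0 ≤ x t i)
include hp hx hnn

theorem totalBacteria_mul_exp_le {Bs ρ a b : ℝ}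
    (hρ : ∀ j, ρ ≤ Bs * (p.conversion j * p.consumption j) - p.death j) (ha : 0 ≤ a)
    (hab : a ≤ b) (hB : ∀ u ∈ Ico a b, Bs ≤ x u 0) :
    totalBacteria (x a) * exp (ρ * (b - a)) ≤ totalBacteria (x b) := by
  refine mul_exp_le_of_mul_le_deriv hab (fun u hu => hx.hasDerivAt_totalBacteria (ha.trans hu.1))
    fun u hu => ?_
  rw [sum_rhs_succ]
  refine mul_sum_le_sum_mul_of_le _ (fun j _ => (hρ j).trans ?_) fun j _ => hnn u (ha.trans hu.1) _
  have := mul_le_mul_of_nonneg_right (hB u hu)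
    (mul_nonneg (hp.conversion_nonneg j) (hp.consumption_nonneg j))
  linarith

theorem mul_one_sub_exp_le_nutrient {η k a b : ℝ} (hk : ∀ j, p.consumption j ≤ k) (hη : 0 ≤ η)
    (ha : 0 ≤ a) (hab : a ≤ b) (hsmall : ∀ u ∈ Ico a b, totalBacteria (x u) ≤ η) :
    p.Lam / (p.d + k * η) * (1 - exp (-(p.d + k * η) * (b - a))) ≤ x b 0 := by
  have hk₀ : 0 ≤ k := (hp.consumption_nonneg 0).trans (hk 0)
  refine mul_one_sub_exp_le_of_affine_le_deriv hab (by nlinarith [hp.2.1]) (hnn a ha 0)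
    (fun u hu => hx u (ha.trans hu.1) 0) fun u hu => ?_
  have hu := ha.trans hu.1
  have huptake : ∑ j, p.consumption j * x u j.succ ≤ k * η :=
    (sum_mul_le_mul_sum_of_le _ (fun j _ => hk j) fun j _ => hnn u hu _).trans
      (mul_le_mul_of_nonneg_left (hsmall u ‹_›) hk₀)
  rw [rhs_zero_eq]
  nlinarith [mul_le_mul_of_nonneg_left huptake (hnn u hu 0)]

theorem exists_totalBacteria_le : ∃ M, ∀ t, 0 ≤ t → totalBacteria (x t) ≤ M := by
  set τ := Finset.univ.sup' Finset.univ_nonempty p.conversion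
  set m := min p.d (Finset.univ.inf' Finset.univ_nonempty p.death)
  have hτ : ∀ j, p.conversion j ≤ τ := fun j => Finset.le_sup' _ (Finset.mem_univ j)
  have hτ₀ : 0 ≤ τ := (hp.conversion_nonneg 0).trans (hτ 0)
  have hm : 0 < m := lt_min hp.2.1 ((Finset.lt_inf'_iff _).2 fun j _ => hp.death_pos j)
  have hmd : ∀ j, m ≤ p.death j := fun j =>
    (min_le_right _ _).trans (Finset.inf'_le _ (Finset.mem_univ j))
  -- `τ B + N` is a Lyapunov-type function: its derivative is at most `Λ τ - m (τ B + N)`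
  refine ⟨max (τ * x 0 0 + totalBacteria (x 0)) (p.Lam * τ / m), fun t ht => ?_⟩
  have hV := le_max_of_deriv_le_affine (f := fun s => τ * x s 0 + totalBacteria (x s))
    (L := p.Lam * τ) ht hm (fun u hu => ((hx u hu.1 0).const_mul τ).add
      (hx.hasDerivAt_totalBacteria hu.1)) fun u hu => ?_
  · nlinarith [hnn t ht 0]
  have hu := hu.1
  have hsum : ∑ j, (x u 0 * (p.conversion j * p.consumption j) - p.death j) * x u j.succ ≤
      τ * x u 0 * ∑ j, p.consumption j * x u j.succ - m * totalBacteria (x u) := by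
    rw [totalBacteria, Finset.mul_sum, Finset.mul_sum, ← Finset.sum_sub_distrib]
    refine Finset.sum_le_sum fun j _ => ?_
    nlinarith [mul_nonneg (mul_nonneg (mul_nonneg (hnn u hu 0) (hp.consumption_nonneg j))
      (hnn u hu j.succ)) (sub_nonneg.2 (hτ j)),
      mul_le_mul_of_nonneg_right (hmd j) (hnn u hu j.succ)]
  rw [rhs_zero_eq, sum_rhs_succ]
  nlinarith [mul_le_mul_of_nonneg_right (min_le_left _ _ : m ≤ p.d) (mul_nonneg hτ₀ (hnn u hu 0))]

end IsSolution

theorem exists_pos_eventually_le_totalBacteria {p : ModelParams} (hp : p.Valid)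
    (hthreshold : ∀ j, p.death j < p.Lam / p.d * (p.conversion j * p.consumption j)) :
    ∃ δ > 0, ∀ x : ℝ → Fin 5 → ℝ, IsSolution p x → (∀ t, 0 ≤ t → ∀ i, 0 ≤ x t i) →
      0 < totalBacteria (x 0) → ∀ᶠ t in atTop, δ ≤ totalBacteria (x t) := by
  obtain ⟨Bs, hBs, hBs_growth⟩ := exists_lt_forall_lt_mul hthreshold
  set ρ := Finset.univ.inf' Finset.univ_nonempty
    fun j => Bs * (p.conversion j * p.consumption j) - p.death j
  have hρ : 0 < ρ := (Finset.lt_inf'_iff _).2 fun j _ => sub_pos.2 (hBs_growth j)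
  set k := Finset.univ.sup' Finset.univ_nonempty p.consumption
  obtain ⟨η, hη, hBs_η⟩ := exists_pos_lt_div_add_mul (k := k) hp.2.1.ne' hBs
  have hk : 0 ≤ k := (hp.consumption_nonneg 0).trans (Finset.le_sup' _ (Finset.mem_univ 0))
  have hc : 0 < p.d + k * η := add_pos_of_pos_of_nonneg hp.2.1 (mul_nonneg hk hη.le)
  obtain ⟨T, hT, hrecovery⟩ := exists_forall_ge_le_mul_one_sub_exp hc hBs_η
  set D := Finset.univ.sup' Finset.univ_nonempty p.death
  have hD : 0 ≤ D := (hp.death_pos 0).le.trans (Finset.le_sup' _ (Finset.mem_univ 0))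
  refine ⟨η * exp (-D * T), by positivity, fun x hx hnn hW0 => ?_⟩
  refine eventually_le_of_decay_of_growth
    (fun t ht => (hx.hasDerivAt_totalBacteria ht).continuousAt.continuousWithinAt)
    hW0 hη hD hρ hT (fun a b ha hab => ?_) fun a b ha hab hsmall => ?_
  · refine hx.totalBacteria_mul_exp_le hp hnn (Bs := 0) (fun j => ?_) ha hab
      fun u hu => hnn u (ha.trans hu.1) 0
    simpa using Finset.le_sup' p.death (Finset.mem_univ j)
  · -- while `N ≤ η`, the nutrient recovers above `Bs` within time `T`, after which `N` grows
    refine hx.totalBacteria_mul_exp_le hp hnn (fun j => Finset.inf'_le _ (Finset.mem_univ j))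
      (by linarith) hab fun u hu => (hrecovery (u - a) (by linarith [hu.1])).trans ?_
    exact hx.mul_one_sub_exp_le_nutrient hp hnn (fun j => Finset.le_sup' _ (Finset.mem_univ j))
      hη.le ha (by linarith [hu.1]) fun v hv => hsmall v ⟨hv.1, hv.2.le.trans hu.2.le⟩

theorem uniform_persistence_general
    (p : ModelParams) (hp : p.Valid)
    (B0 Tmin τmax K : ℝ) (hB0 : B0 = p.Lam / p.d)
    (hT : Tmin = min (min (B0 * p.ts * p.bs / p.ds) (B0 * p.tm * p.bm / p.dm))
                     (min (B0 * p.tp * p.bp / p.dp) (B0 * p.tmp * p.bmp / p.dmp)))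
    (hTgt : 1 < Tmin) :
    ∃ δ : ℝ, 0 < δ ∧
      ∀ x : ℝ → Fin 5 → ℝ, IsSolution p x →
        (∀ t : ℝ, 0 ≤ t → ∀ i, 0 ≤ x t i) →
        (τmax * x 0 0 + (x 0 1 + x 0 2 + x 0 3 + x 0 4) ≤ K) →
        (0 < x 0 1 + x 0 2 + x 0 3 + x 0 4) →
        δ ≤ Filter.liminf (fun t => x t 1 + x t 2 + x t 3 + x t 4) Filter.atTop := by
  subst hB0 hT
  obtain ⟨δ, hδ, hpersistent⟩ :=
    exists_pos_eventually_le_totalBacteria hp (death_lt_of_one_lt_min hp hTgt)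
  refine ⟨δ, hδ, fun x hx hnn _ hW0 => ?_⟩
  simp only [← totalBacteria_eq] at hW0 ⊢
  -- `liminf` in `ℝ` takes a junk value unless `N` is bounded above
  obtain ⟨M, hM⟩ := hx.exists_totalBacteria_le hp hnn
  exact le_liminf_of_le (isCoboundedUnder_ge_of_eventually_le atTop (eventually_atTop.2 ⟨0, hM⟩))
    (hpersistent x hx hnn hW0)

/-- Uniform persistence: if `min_j T_j > 1` then there is a
`δ > 0` such that every nonnegative solution with initial datum in
`X₀ = {ω ∈ Ω : N_s+N_m+N_p+N_{m.p} > 0}` (where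
`Ω = {ω ∈ ℝ⁵₊ : τmax·B + N_s+N_m+N_p+N_{m.p} ≤ K}`) satisfies
`liminf_{t→∞} (N_s+N_m+N_p+N_{m.p})(t) ≥ δ`. -/
theorem uniform_persistence
    (p : ModelParams) (hp : p.Valid)
    (B0 Tmin τmax dmin K : ℝ) (hB0 : B0 = p.Lam / p.d)
    (hT : Tmin = min (min (B0 * p.ts * p.bs / p.ds) (B0 * p.tm * p.bm / p.dm))
                     (min (B0 * p.tp * p.bp / p.dp) (B0 * p.tmp * p.bmp / p.dmp)))
    (hτmax : τmax = max (max p.ts p.tm) (max p.tp p.tmp))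
    (hdmin : dmin = min (min p.ds p.dm) (min p.dp p.dmp))
    (hK : K = p.Lam * τmax / min p.d dmin)
    (hTgt : 1 < Tmin) :
    ∃ δ : ℝ, 0 < δ ∧
      ∀ x : ℝ → Fin 5 → ℝ, IsSolution p x →
        (∀ t : ℝ, 0 ≤ t → ∀ i, 0 ≤ x t i) →
        (τmax * x 0 0 + (x 0 1 + x 0 2 + x 0 3 + x 0 4) ≤ K) →
        (0 < x 0 1 + x 0 2 + x 0 3 + x 0 4) →
        δ ≤ Filter.liminf (fun t => x t 1 + x t 2 + x t 3 + x t 4) Filter.atTop :=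
  uniform_persistence_general p hp B0 Tmin τmax K hB0 hT hTgt
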